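/- Let P be a prime implication filter of an MV-algebra L and let F be any prime implication filter. Then ℓ(P) ⊆ F if and only if F is comparable to P (F ⊆ P or P ⊆ F). -/

import Mathlib

/-- An MV-algebra `(α, ⊕, ¬, 0)` with the standard axioms. -/
class MV (α : Type*) extends Add α, Neg α, Zero α where
  add_assoc : ∀ a b c : α, a + (b + c) = (a + b) + c
  add_comm : ∀ a b : α, a + b = b + a
  add_zero : ∀ a : α, a + 0 = a
  neg_neg : ∀ a : α, - -a = a
  add_neg_zero : ∀ a : α, a + -(0 : α) = -(0 : α)
  luk : ∀ a b : α, -(-a + b) + b = -(-b + a) + a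

namespace MV

variable {α : Type*} [MV α]

/-- The top element `1 = ¬0`. -/
def one (α : Type*) [MV α] : α := -(0 : α)

/-- Implication `x → y = ¬x ⊕ y`. -/
def imp (a b : α) : α := -a + b

/-- Strong conjunction `x ⊗ y = ¬(¬x ⊕ ¬y)`. -/
def otimes (a b : α) : α := -(-a + -b)

/-- Join `x ∨ y = (x → y) → y`. -/
def sup (a b : α) : α := imp (imp a b) b

/-- Meet `x ∧ y = ¬(¬x ∨ ¬y)`. -/
def inf (a b : α) : α := -(sup (-a) (-b))

/-- Order: `x ≤ y` iff `x → y = 1`. -/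
def le (a b : α) : Prop := imp a b = one α

/-- Strict order. -/
def lt (a b : α) : Prop := le a b ∧ a ≠ b

/-- `n`-fold `⊗`-power. -/
def pow (a : α) : ℕ → α
  | 0 => one α
  | n + 1 => otimes a (pow a n)

/-- An implication filter: a lattice filter closed under `⊗`. -/
def IsImpFilter (F : Set α) : Prop :=
  one α ∈ F ∧ (∀ x ∈ F, ∀ y : α, le x y → y ∈ F) ∧
    (∀ x ∈ F, ∀ y ∈ F, inf x y ∈ F) ∧ (∀ x ∈ F, ∀ y ∈ F, otimes x y ∈ F)

/-- A prime implication filter: proper and `x ∨ y ∈ F → x ∈ F ∨ y ∈ F`. -/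
def IsPrime (F : Set α) : Prop :=
  IsImpFilter F ∧ F ≠ Set.univ ∧ ∀ x y : α, sup x y ∈ F → x ∈ F ∨ y ∈ F

/-- A minimal prime implication filter. -/
def IsMinimalPrime (F : Set α) : Prop :=
  IsPrime F ∧ ∀ G : Set α, IsPrime G → G ⊆ F → G = F

/-- A maximal proper implication filter. -/
def IsMaximal (F : Set α) : Prop :=
  IsImpFilter F ∧ F ≠ Set.univ ∧
    ∀ G : Set α, IsImpFilter G → G ≠ Set.univ → F ⊆ G → G = F

/-- A counit: `u < 1` joining to `1` with some `v < 1`. -/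
def IsCounit (u : α) : Prop :=
  lt u (one α) ∧ ∃ v : α, lt v (one α) ∧ sup u v = one α

/-- The implication filter generated by a set. -/
def gen (S : Set α) : Set α := ⋂₀ {F : Set α | IsImpFilter F ∧ S ⊆ F}

/-- The Conrad filter: the implication filter generated by all counits. -/
def conrad (α : Type*) [MV α] : Set α := gen {u : α | IsCounit u}

/-- The localizing filter `ℓ(P)`, generated by `{x → p : p ∈ P, x ∉ P}`. -/
def locFilter (P : Set α) : Set α :=
  gen {z : α | ∃ x : α, x ∉ P ∧ ∃ p ∈ P, z = imp x p}

end MV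

/-!
If `ℓ(P) ⊆ F` and there were `a ∈ F \ P` and `b ∈ P \ F`, then `a → b ∈ ℓ(P) ⊆ F` and modus
ponens would put `b` in `F`. Conversely, `ℓ(P) ⊆ P` because `p ≤ x → p`, which handles `P ⊆ F`.
If `F ⊆ P`, prelinearity `(x → p) ∨ (p → x) = 1` puts `x → p` or `p → x` in the prime filter `F`;
the second would lie in `P` and force `x ∈ P` by modus ponens, so every generator of `ℓ(P)` is in `F`.
-/

namespace MV

variable {α : Type*} [MV α]

section Arithmetic

lemma zero_add (a : α) : 0 + a = a := by
  rw [MV.add_comm]; exact MV.add_zero a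

lemma one_add (a : α) : one α + a = one α := by
  rw [MV.add_comm]; exact MV.add_neg_zero a

lemma add_left_comm (a b c : α) : a + (b + c) = b + (a + c) := by
  rw [MV.add_assoc, MV.add_comm a b, ← MV.add_assoc]

lemma imp_self (a : α) : imp a a = one α := by
  have h := MV.luk a (one α)
  rwa [one, MV.add_neg_zero, MV.neg_neg, MV.zero_add, eq_comm] at h

lemma sup_comm (x y : α) : sup x y = sup y x := MV.luk x y

lemma le_imp (p x : α) : le p (imp x p) := by
  have hp : -p + p = one α := imp_self p
  show -p + (-x + p) = one α
  rw [add_left_comm, hp, one, MV.add_neg_zero]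

lemma le_sup_left (x y : α) : le x (sup x y) := by
  rw [le, sup, imp, imp, add_left_comm, ← imp, ← imp, imp_self]

lemma neg_le_neg {x y : α} (h : le x y) : le (-y) (-x) := by
  rwa [le, imp, MV.neg_neg, MV.add_comm]

lemma sup_eq_left_of_le {a b : α} (h : le b a) : sup a b = a := by
  rw [sup_comm, sup, h, imp, one, MV.neg_neg, MV.zero_add]

lemma sup_imp_self_right (x y : α) : imp (sup x y) y = imp x y := by
  have h := MV.luk (imp x y) y
  have hy : -y + imp x y = one α := le_imp y x
  rw [hy, one, MV.neg_neg, MV.zero_add] at h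
  exact h

lemma sup_imp_self_left (x y : α) : imp (sup x y) x = imp y x := by
  rw [sup_comm]; exact sup_imp_self_right y x

/-- Both implications factor through `s = x ∨ y` (`s → x = y → x`, `s → y = x → y`), and then
`x ≤ s` gives `¬x ∨ ¬s = ¬x`, which is exactly the claim. -/
lemma imp_imp_imp_swap (x y : α) : imp (imp y x) (imp x y) = imp x y := by
  set s := sup x y
  have hs : sup (-x) (-s) = -x := sup_eq_left_of_le (neg_le_neg (le_sup_left x y))
  rw [sup, imp, imp, MV.neg_neg] at hs
  have hx : -s + x = -y + x := sup_imp_self_left x y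
  have hy : -s + y = -x + y := sup_imp_self_right x y
  calc imp (imp y x) (imp x y)
      = -(-y + x) + (-x + y) := rfl
    _ = -(-s + x) + (-s + y) := by rw [hx, hy]
    _ = (-(x + -s) + -s) + y := by rw [MV.add_comm (-s) x, MV.add_assoc]
    _ = imp x y := by rw [hs, imp]

lemma sup_imp_imp_eq_one (x y : α) : sup (imp x y) (imp y x) = one α := by
  rw [sup, imp_imp_imp_swap, imp_self]

lemma otimes_imp_le (a b : α) : le (otimes a (imp a b)) b := by
  rw [le, imp, otimes, imp, MV.neg_neg, ← MV.add_assoc, MV.luk a b, MV.add_comm (-(-b + a)) a,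
    MV.add_assoc, ← imp, imp_self, one_add]

end Arithmetic

section Filters

variable {F P S : Set α}

lemma IsImpFilter.mem_of_le (hF : IsImpFilter F) {x y : α} (hx : x ∈ F) (h : le x y) : y ∈ F :=
  hF.2.1 x hx y h

lemma IsImpFilter.mem_of_imp_mem (hF : IsImpFilter F) {a b : α} (ha : a ∈ F)
    (hab : imp a b ∈ F) : b ∈ F :=
  hF.mem_of_le (hF.2.2.2 a ha _ hab) (otimes_imp_le a b)

lemma IsPrime.imp_mem_or_imp_mem (hF : IsPrime F) (x y : α) : imp x y ∈ F ∨ imp y x ∈ F :=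
  hF.2.2 _ _ (sup_imp_imp_eq_one x y ▸ hF.1.1)

lemma gen_subset (hF : IsImpFilter F) (h : S ⊆ F) : gen S ⊆ F := fun _ hz => hz F ⟨hF, h⟩

lemma subset_gen : S ⊆ gen S := fun _ hz _ hF => hF.2 hz

lemma imp_mem_locFilter {x p : α} (hx : x ∉ P) (hp : p ∈ P) : imp x p ∈ locFilter P :=
  subset_gen ⟨x, hx, p, hp, rfl⟩

lemma locFilter_subset_self (hP : IsImpFilter P) : locFilter P ⊆ P := by
  refine gen_subset hP ?_
  rintro _ ⟨x, -, p, hp, rfl⟩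
  exact hP.mem_of_le hp (le_imp p x)

lemma locFilter_subset_of_subset (hP : IsImpFilter P) (hF : IsPrime F) (hFP : F ⊆ P) :
    locFilter P ⊆ F := by
  refine gen_subset hF.1 ?_
  rintro _ ⟨x, hx, p, hp, rfl⟩
  refine (hF.imp_mem_or_imp_mem x p).resolve_right fun hpx => hx ?_
  exact hP.mem_of_imp_mem hp (hFP hpx)

lemma subset_or_subset_of_locFilter_subset (hF : IsImpFilter F) (h : locFilter P ⊆ F) :
    F ⊆ P ∨ P ⊆ F := by
  by_contra! hc
  obtain ⟨⟨a, haF, haP⟩, ⟨b, hbP, hbF⟩⟩ := And.imp Set.not_subset.1 Set.not_subset.1 hc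
  exact hbF (hF.mem_of_imp_mem haF (h (imp_mem_locFilter haP hbP)))

end Filters

end MV

open MV

/-- `ℓ(P) ⊆ F` iff the prime filter `F` is comparable to `P`. -/
theorem locFilter_subset_iff_comparable {α : Type*} [MV α] (P F : Set α)
    (hP : IsPrime P) (hF : IsPrime F) :
    locFilter P ⊆ F ↔ F ⊆ P ∨ P ⊆ F := by
  refine ⟨subset_or_subset_of_locFilter_subset hF.1, ?_⟩
  rintro (hFP | hPF)
  · exact locFilter_subset_of_subset hP.1 hF hFP
  · exact (locFilter_subset_self hP.1).trans hPF
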